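/- For any distribution P on S_n and any bucket order C = (C_1,...,C_K), the minimum over all bucket distributions P' associated to C of the 1-Wasserstein distance W(P,P') with Kendall's τ cost equals Λ_P(C) = Σ_{i ≺_C j} p_{j,i}, i.e., the sum over all inter-bucket pairs (i,j) with i in an earlier bucket than j of the probability p_{j,i} = P(Σ(j)<Σ(i)). -/

import Mathlib

/-!
If `σ'` ranks every item of an earlier bucket before every item of a later one, then each
inter-bucket pair that `σ` inverts is discordant between `σ` and `σ'`, so `d_τ(σ, σ') ≥ D(σ)`, the number of
inter-bucket inversions of `σ`. A bucket distribution `P'` only charges such `σ'`, hence any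
coupling of `P` and `P'` costs at least `E_P[D] = Λ_P(C)`. Coupling `σ` with its stable sort by
bucket, which reverses exactly those pairs, attains the bound.
-/

open Finset

/-- Kendall's τ distance. -/
def kendallTau {n : ℕ} (σ σ' : Equiv.Perm (Fin n)) : ℕ :=
  (Finset.univ.filter (fun p : Fin n × Fin n =>
    p.1 < p.2 ∧ ¬((σ p.1 < σ p.2) ↔ (σ' p.1 < σ' p.2)))).card

/-- Pairwise marginal `p_{i,j} = P(σ(i) < σ(j))`. -/
def pairwiseMarginal {n : ℕ} (P : Equiv.Perm (Fin n) → ℝ) (i j : Fin n) : ℝ :=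
  ∑ σ : Equiv.Perm (Fin n), if σ i < σ j then P σ else 0

/-- `μ` is a coupling of the distributions `P` and `P'` on `S_n`. -/
def IsCoupling {n : ℕ} (P P' : Equiv.Perm (Fin n) → ℝ)
    (μ : Equiv.Perm (Fin n) × Equiv.Perm (Fin n) → ℝ) : Prop :=
  (∀ q, 0 ≤ μ q) ∧ (∀ σ, ∑ σ' : Equiv.Perm (Fin n), μ (σ, σ') = P σ) ∧
    (∀ σ', ∑ σ : Equiv.Perm (Fin n), μ (σ, σ') = P' σ')

/-- `P'` is a probability distribution on `S_n`. -/
def IsDist {n : ℕ} (P' : Equiv.Perm (Fin n) → ℝ) : Prop :=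
  (∀ σ, 0 ≤ P' σ) ∧ ∑ σ : Equiv.Perm (Fin n), P' σ = 1

/-- `P'` is a bucket distribution associated to the bucket assignment `b`:
with probability one, items in an earlier bucket are ranked lower. -/
def IsBucketDist {n K : ℕ} (b : Fin n → Fin K)
    (P' : Equiv.Perm (Fin n) → ℝ) : Prop :=
  ∀ i j, b i < b j → pairwiseMarginal P' j i = 0

namespace Equiv.Perm

variable {n : ℕ} {α : Type*} [LinearOrder α]

/-- For injective `f`, sends `i` to the rank of `f i` among the values of `f`. -/
def rankPerm (f : Fin n → α) : Equiv.Perm (Fin n) :=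
  (Tuple.sort f)⁻¹

theorem rankPerm_lt_rankPerm_iff {f : Fin n → α} (hf : Function.Injective f) (i j : Fin n) :
    rankPerm f i < rankPerm f j ↔ f i < f j := by
  have hmono : StrictMono (f ∘ Tuple.sort f) :=
    (Tuple.monotone_sort f).strictMono_of_injective (hf.comp (Tuple.sort f).injective)
  simpa [rankPerm] using (hmono.lt_iff_lt (a := rankPerm f i) (b := rankPerm f j)).symm

/-- Stable sort of the ranking `σ` by the buckets `b`: items are ordered by bucket first and
by their `σ`-rank within a bucket. -/
def bucketize (b : Fin n → α) (σ : Equiv.Perm (Fin n)) : Equiv.Perm (Fin n) :=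
  rankPerm fun i => toLex (b i, σ i)

theorem bucketize_lt_bucketize_iff (b : Fin n → α) (σ : Equiv.Perm (Fin n)) (i j : Fin n) :
    bucketize b σ i < bucketize b σ j ↔ b i < b j ∨ b i = b j ∧ σ i < σ j := by
  rw [bucketize, rankPerm_lt_rankPerm_iff, Prod.Lex.toLex_lt_toLex]
  intro i j h
  exact σ.injective (congrArg (fun x => (ofLex x).2) h)

end Equiv.Perm

open Equiv.Perm

section KendallTau

variable {n : ℕ}

theorem kendallTau_eq_card_filter (σ σ' : Equiv.Perm (Fin n)) :
    kendallTau σ σ' = #{p : Fin n × Fin n | σ' p.1 < σ' p.2 ∧ σ p.2 < σ p.1} := by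
  have hσ := σ.injective
  have hσ' := σ'.injective
  refine card_nbij' (fun p => if σ' p.1 < σ' p.2 then p else p.swap)
    (fun p => if p.1 < p.2 then p else p.swap) ?_ ?_ ?_ ?_ <;>
  · intro p hp
    simp only [coe_filter, mem_univ, true_and] at hp ⊢
    grind

variable {α : Type*} [LinearOrder α]

def bucketInversions (b : Fin n → α) (σ : Equiv.Perm (Fin n)) : ℕ :=
  #{p : Fin n × Fin n | b p.1 < b p.2 ∧ σ p.2 < σ p.1}

theorem bucketInversions_le_kendallTau (b : Fin n → α) {σ σ' : Equiv.Perm (Fin n)}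
    (hσ' : ∀ i j, b i < b j → σ' i < σ' j) : bucketInversions b σ ≤ kendallTau σ σ' := by
  rw [kendallTau_eq_card_filter]
  exact card_le_card (monotone_filter_right _ fun _ _ hp => ⟨hσ' _ _ hp.1, hp.2⟩)

theorem kendallTau_bucketize (b : Fin n → α) (σ : Equiv.Perm (Fin n)) :
    kendallTau σ (bucketize b σ) = bucketInversions b σ := by
  rw [kendallTau_eq_card_filter, bucketInversions]
  refine congrArg card (filter_congr fun p _ => ?_)
  rw [bucketize_lt_bucketize_iff]
  constructor
  · rintro ⟨h | ⟨-, h⟩, hσ⟩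
    exacts [⟨h, hσ⟩, absurd h hσ.asymm]
  · exact fun ⟨h, hσ⟩ => ⟨Or.inl h, hσ⟩

theorem sum_mul_bucketInversions (b : Fin n → α) (Q : Equiv.Perm (Fin n) → ℝ) :
    ∑ σ, Q σ * (bucketInversions b σ : ℝ) =
      ∑ p ∈ univ.filter (fun p : Fin n × Fin n => b p.1 < b p.2), pairwiseMarginal Q p.2 p.1 := by
  simp_rw [bucketInversions, ← filter_filter, natCast_card_filter, mul_sum, mul_boole]
  rw [sum_comm]
  rfl

end KendallTau

section Coupling

variable {n : ℕ} {P P' : Equiv.Perm (Fin n) → ℝ}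

theorem IsCoupling.le_snd {μ : Equiv.Perm (Fin n) × Equiv.Perm (Fin n) → ℝ}
    (hμ : IsCoupling P P' μ) (q : Equiv.Perm (Fin n) × Equiv.Perm (Fin n)) : μ q ≤ P' q.2 := by
  rw [← hμ.2.2 q.2]
  exact single_le_sum (fun σ _ => hμ.1 (σ, q.2)) (mem_univ q.1)

theorem IsCoupling.sum_mul_fst {μ : Equiv.Perm (Fin n) × Equiv.Perm (Fin n) → ℝ}
    (hμ : IsCoupling P P' μ) (f : Equiv.Perm (Fin n) → ℝ) :
    ∑ q, μ q * f q.1 = ∑ σ, P σ * f σ := by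
  simp_rw [Fintype.sum_prod_type, ← sum_mul, hμ.2.1]

def pushforward (P : Equiv.Perm (Fin n) → ℝ) (g : Equiv.Perm (Fin n) → Equiv.Perm (Fin n))
    (σ' : Equiv.Perm (Fin n)) : ℝ :=
  ∑ σ, if g σ = σ' then P σ else 0

def graphCoupling (P : Equiv.Perm (Fin n) → ℝ) (g : Equiv.Perm (Fin n) → Equiv.Perm (Fin n))
    (q : Equiv.Perm (Fin n) × Equiv.Perm (Fin n)) : ℝ :=
  if g q.1 = q.2 then P q.1 else 0

variable (g : Equiv.Perm (Fin n) → Equiv.Perm (Fin n))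

theorem isDist_pushforward (hP : IsDist P) : IsDist (pushforward P g) := by
  refine ⟨fun σ' => sum_nonneg fun σ _ => ?_, ?_⟩
  · split_ifs
    exacts [hP.1 σ, le_rfl]
  · simp only [pushforward, ← sum_filter]
    rw [sum_fiberwise, hP.2]

theorem isCoupling_graphCoupling (hP : ∀ σ, 0 ≤ P σ) :
    IsCoupling P (pushforward P g) (graphCoupling P g) := by
  refine ⟨fun q => ?_, fun σ => by simp [graphCoupling], fun σ' => rfl⟩
  unfold graphCoupling
  split_ifs
  exacts [hP q.1, le_rfl]

theorem pairwiseMarginal_pushforward (i j : Fin n) :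
    pairwiseMarginal (pushforward P g) i j = ∑ σ, if g σ i < g σ j then P σ else 0 := by
  simp only [pairwiseMarginal, pushforward, ← sum_filter]
  rw [sum_fiberwise_eq_sum_filter]
  simp

theorem sum_graphCoupling_mul (f : Equiv.Perm (Fin n) × Equiv.Perm (Fin n) → ℝ) :
    ∑ q, graphCoupling P g q * f q = ∑ σ, P σ * f (σ, g σ) := by
  simp [Fintype.sum_prod_type, graphCoupling, ite_mul]

end Coupling

section Bucket

variable {n K : ℕ} {b : Fin n → Fin K}

theorem IsBucketDist.lt_of_ne_zero {P' : Equiv.Perm (Fin n) → ℝ} (hP' : IsBucketDist b P')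
    (hP'0 : ∀ σ, 0 ≤ P' σ) {σ' : Equiv.Perm (Fin n)} (hσ' : P' σ' ≠ 0) {i j : Fin n}
    (hij : b i < b j) : σ' i < σ' j := by
  by_contra hle
  have hlt : σ' j < σ' i :=
    (not_lt.mp hle).lt_of_ne (σ'.injective.ne (fun h => hij.ne (congrArg b h).symm))
  have hterm := (sum_eq_zero_iff_of_nonneg fun σ _ => ?_).mp (hP' i j hij) σ' (mem_univ _)
  · exact hσ' (by simpa [hlt] using hterm)
  · split_ifs
    exacts [hP'0 σ, le_rfl]

variable (b)

theorem isBucketDist_pushforward_bucketize (P : Equiv.Perm (Fin n) → ℝ) :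
    IsBucketDist b (pushforward P (bucketize b)) := by
  intro i j hij
  rw [pairwiseMarginal_pushforward]
  exact sum_eq_zero fun σ _ =>
    if_neg ((bucketize_lt_bucketize_iff b σ i j).mpr (Or.inl hij)).asymm

theorem sum_mul_bucketInversions_le_sum_mul_kendallTau {P P' : Equiv.Perm (Fin n) → ℝ}
    {μ : Equiv.Perm (Fin n) × Equiv.Perm (Fin n) → ℝ} (hP'0 : ∀ σ, 0 ≤ P' σ)
    (hP' : IsBucketDist b P') (hμ : IsCoupling P P' μ) :
    ∑ σ, P σ * (bucketInversions b σ : ℝ) ≤ ∑ q, μ q * (kendallTau q.1 q.2 : ℝ) := by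
  rw [← hμ.sum_mul_fst]
  refine sum_le_sum fun q _ => ?_
  rcases (hμ.1 q).eq_or_lt with hq | hq
  · simp [← hq]
  · have hq' : P' q.2 ≠ 0 := (hq.trans_le (hμ.le_snd q)).ne'
    gcongr
    exact_mod_cast bucketInversions_le_kendallTau b fun i j => hP'.lt_of_ne_zero hP'0 hq'

end Bucket

theorem min_wasserstein_bucket {n K : ℕ} (b : Fin n → Fin K)
    (P : Equiv.Perm (Fin n) → ℝ)
    (hP0 : ∀ σ, 0 ≤ P σ) (hP1 : ∑ σ : Equiv.Perm (Fin n), P σ = 1) :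
    sInf {c : ℝ | ∃ P' μ, IsDist P' ∧ IsBucketDist b P' ∧ IsCoupling P P' μ ∧
        c = ∑ q : Equiv.Perm (Fin n) × Equiv.Perm (Fin n),
              μ q * (kendallTau q.1 q.2 : ℝ)} =
      ∑ p ∈ Finset.univ.filter (fun p : Fin n × Fin n => b p.1 < b p.2),
        pairwiseMarginal P p.2 p.1 := by
  rw [← sum_mul_bucketInversions]
  refine IsLeast.csInf_eq ⟨⟨pushforward P (bucketize b), graphCoupling P (bucketize b),
    isDist_pushforward _ ⟨hP0, hP1⟩, isBucketDist_pushforward_bucketize b P,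
    isCoupling_graphCoupling _ hP0, ?_⟩, ?_⟩
  · simp_rw [sum_graphCoupling_mul, kendallTau_bucketize]
  · rintro c ⟨P', μ, hP', hbucket, hμ, rfl⟩
    exact sum_mul_bucketInversions_le_sum_mul_kendallTau b hP'.1 hbucket hμ
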